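/- arXiv:1112.0256 — 3 statements merged into one kernel-verified Lean document; each statement's English description precedes it below -/
import Mathlib

section
/- Let m ≥ 3 be an integer and let χ(λ) = ∏_{k=1}^{m−1} (λ + k) − m! be a polynomial in the complex variable λ. Then: (a) χ(1) = 0; (b) every complex root of χ is a simple root; and (c) every complex root λ of χ with λ ≠ 1 satisfies Re(λ) < 1. -/
/-!
Write `P(λ) = ∏_{k=1}^{m-1} (λ + k)`, so that `χ = P - m!` and `P(1) = m!`.
If `Re z ≥ 1` and `z ≠ 1`, then `|z + k| > k + 1` for every `k`, hence `|P(z)| > m!`.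
A multiple root `z` of `χ` is a critical point of `P` with `P(z) = m! ≠ 0`, so the logarithmic
derivative `∑ 1/(z + k)` vanishes there. Its imaginary part forces `z` to be real, and then the
signs of the summands force `-(m-1) ≤ z ≤ -1`; on that interval `|P| ≤ (m-1)! < m!`.
-/

open Polynomial

/-- The characteristic polynomial `χ(λ) = ∏_{k=1}^{m-1} (λ + k) − m!` of the
`m`-ary search tree. -/
noncomputable def chiPoly (m : ℕ) : Polynomial ℂ :=
  (∏ k ∈ Finset.Icc 1 (m - 1), (X + C (k : ℂ))) - C (m.factorial : ℂ)

open Finset Nat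

theorem Finset.prod_Icc_one_eq_prod_range {M : Type*} [CommMonoid M] (f : ℕ → M) (n : ℕ) :
    ∏ k ∈ Icc 1 n, f k = ∏ k ∈ range n, f (k + 1) := by
  rw [← Finset.Ico_add_one_right_eq_Icc, Finset.prod_Ico_eq_prod_range]
  simp [add_comm]

theorem Finset.prod_range_add_two_eq_factorial (n : ℕ) :
    ∏ k ∈ range n, (k + 2) = (n + 1)! := by
  rw [← prod_range_add_one_eq_factorial, prod_range_succ']
  simp

theorem Polynomial.eval_derivative_prod_X_add_C {K ι : Type*} [Field K] (s : Finset ι)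
    (a : ι → K) {x : K} (hx : ∀ i ∈ s, x + a i ≠ 0) :
    (derivative (∏ i ∈ s, (X + C (a i)))).eval x
      = (∏ i ∈ s, (x + a i)) * ∑ i ∈ s, (x + a i)⁻¹ := by
  classical
  rw [derivative_prod_finset, eval_finsetSum, mul_sum]
  refine sum_congr rfl fun i hi => ?_
  rw [← mul_prod_erase s _ hi, mul_comm (x + a i), mul_inv_cancel_right₀ (hx i hi)]
  simp [eval_prod]

theorem Polynomial.rootMultiplicity_eq_one {R : Type*} [CommRing R] {p : R[X]} {t : R}
    (hp : p ≠ 0) (ht : p.IsRoot t) (ht' : ¬ (derivative p).IsRoot t) :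
    p.rootMultiplicity t = 1 := by
  have hpos := (rootMultiplicity_pos hp).2 ht
  have hle := mt (one_lt_rootMultiplicity_iff_isRoot hp).1 fun h => ht' h.2
  omega

theorem Complex.im_eq_zero_of_sum_inv_add_ofReal_eq_zero {ι : Type*} {s : Finset ι}
    (hs : s.Nonempty) (a : ι → ℝ) {z : ℂ} (h : ∑ i ∈ s, (z + a i)⁻¹ = 0) : z.im = 0 := by
  by_contra him
  have hpos : ∀ i ∈ s, 0 < (normSq (z + a i))⁻¹ := fun i _ =>
    inv_pos.2 <| normSq_pos.2 fun h0 => him <| by simpa using congrArg im h0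
  have him_sum : (∑ i ∈ s, (z + a i)⁻¹).im = -z.im * ∑ i ∈ s, (normSq (z + a i))⁻¹ := by
    simp [im_sum, inv_im, mul_sum, div_eq_mul_inv]
  rw [h, zero_im] at him_sum
  rcases mul_eq_zero.1 him_sum.symm with h' | h'
  exacts [him (neg_eq_zero.1 h'), (sum_pos hpos hs).ne' h']

theorem exists_nonpos_and_exists_nonneg_of_sum_inv_eq_zero {ι : Type*} {s : Finset ι}
    (hs : s.Nonempty) {f : ι → ℝ} (h : ∑ i ∈ s, (f i)⁻¹ = 0) :
    (∃ i ∈ s, f i ≤ 0) ∧ ∃ i ∈ s, 0 ≤ f i := by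
  constructor <;> by_contra! hf
  · exact (sum_pos (fun i hi => inv_pos.2 (hf i hi)) hs).ne' h
  · exact (sum_neg (fun i hi => inv_lt_zero.2 (hf i hi)) hs).ne h

theorem prod_range_abs_sub_le_factorial :
    ∀ (n : ℕ) {y : ℝ}, -1 ≤ y → y ≤ n → ∏ k ∈ range n, |y - k| ≤ n !
  | 0, _, _, _ => by simp
  | n + 1, y, hy₀, hy₁ => by
    rw [factorial_succ, cast_mul, mul_comm]
    push_cast at hy₁ ⊢
    rcases le_or_gt y n with hyn | hyn
    · rw [prod_range_succ]
      refine mul_le_mul (prod_range_abs_sub_le_factorial n hy₀ hyn) ?_ (abs_nonneg _)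
        (by positivity)
      rw [abs_sub_le_iff]; constructor <;> linarith
    · rw [prod_range_succ']
      have ih := prod_range_abs_sub_le_factorial n (y := y - 1) (by linarith) (by linarith)
      refine mul_le_mul ?_ ?_ (abs_nonneg _) (by positivity)
      · refine le_of_eq_of_le (prod_congr rfl fun k _ => ?_) ih
        push_cast; ring_nf
      · rw [abs_le]; push_cast; constructor <;> linarith [(n.cast_nonneg : (0:ℝ) ≤ n)]

theorem Complex.one_add_lt_norm_add_ofReal {z : ℂ} (hz : 1 ≤ z.re) (hz₁ : z ≠ 1) (r : ℝ) :
    1 + r < ‖z + r‖ := by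
  have hre : (z + r).re = z.re + r := by simp
  by_cases him : z.im = 0
  · have : 1 < z.re := hz.lt_of_ne fun h => hz₁ (Complex.ext h.symm (by simp [him]))
    linarith [re_le_norm (z + r)]
  · have := abs_re_lt_norm.2 (show (z + r).im ≠ 0 by simpa using him)
    linarith [le_abs_self (z + r).re]

theorem abs_prod_range_add_le_factorial_of_sum_inv_eq_zero {n : ℕ} {x : ℝ}
    (h : ∑ k ∈ range n, (x + (k + 1))⁻¹ = 0) : |∏ k ∈ range n, (x + (k + 1))| ≤ n ! := by
  rcases n.eq_zero_or_pos with rfl | hn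
  · simp
  obtain ⟨⟨i, -, hxi⟩, ⟨j, hj, hxj⟩⟩ :=
    exists_nonpos_and_exists_nonneg_of_sum_inv_eq_zero (nonempty_range_iff.2 hn.ne') h
  have hjn : (j : ℝ) + 1 ≤ n := by exact_mod_cast mem_range.1 hj
  calc |∏ k ∈ range n, (x + (k + 1))| = ∏ k ∈ range n, |(-x - 1) - k| := by
        rw [abs_prod]; refine prod_congr rfl fun k _ => ?_; rw [← abs_neg]; ring_nf
    _ ≤ n ! := prod_range_abs_sub_le_factorial n (by linarith [(i.cast_nonneg : (0:ℝ) ≤ i)])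
        (by linarith)

theorem eval_chiPoly (m : ℕ) (z : ℂ) :
    (chiPoly m).eval z = ∏ k ∈ range (m - 1), (z + (k + 1)) - m ! := by
  simp [chiPoly, eval_prod, prod_Icc_one_eq_prod_range]

theorem derivative_chiPoly (m : ℕ) :
    derivative (chiPoly m) = derivative (∏ k ∈ range (m - 1), (X + C ((k : ℂ) + 1))) := by
  rw [chiPoly, derivative_sub, derivative_C, sub_zero, prod_Icc_one_eq_prod_range]
  push_cast; rfl

theorem prod_eq_factorial_of_isRoot_chiPoly {m : ℕ} {z : ℂ} (hz : (chiPoly m).IsRoot z) :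
    ∏ k ∈ range (m - 1), (z + (k + 1)) = m ! := by
  rwa [IsRoot, eval_chiPoly, sub_eq_zero] at hz

theorem isRoot_chiPoly_one {m : ℕ} (hm : 1 ≤ m) : (chiPoly m).IsRoot 1 := by
  rw [IsRoot, eval_chiPoly, sub_eq_zero, ← Nat.sub_add_cancel hm, Nat.add_sub_cancel,
    ← prod_range_add_two_eq_factorial]
  push_cast
  refine prod_congr rfl fun k _ => by ring

theorem chiPoly_ne_zero {m : ℕ} (hm : 2 ≤ m) : chiPoly m ≠ 0 := by
  intro h
  have h0 := congrArg (eval (-1)) h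
  rw [eval_chiPoly, eval_zero, prod_eq_zero (mem_range.2 (by omega : 0 < m - 1)) (by simp),
    zero_sub, neg_eq_zero] at h0
  exact m.factorial_ne_zero (by exact_mod_cast h0)

theorem re_lt_one_of_isRoot_chiPoly {m : ℕ} (hm : 2 ≤ m) {z : ℂ} (hz : (chiPoly m).IsRoot z)
    (hz₁ : z ≠ 1) : z.re < 1 := by
  by_contra! hre
  have hlt : ∏ k ∈ range (m - 1), ((k : ℝ) + 2) < ∏ k ∈ range (m - 1), ‖z + (k + 1)‖ :=
    prod_lt_prod_of_nonempty (fun _ _ => by positivity)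
      (fun k _ => by
        have h := Complex.one_add_lt_norm_add_ofReal hre hz₁ (k + 1)
        push_cast at h; linarith)
      (nonempty_range_iff.2 (by omega))
  rw [← norm_prod, prod_eq_factorial_of_isRoot_chiPoly hz, Complex.norm_natCast] at hlt
  have hfac := prod_range_add_two_eq_factorial (m - 1)
  rw [Nat.sub_add_cancel (by omega : 1 ≤ m)] at hfac
  exact hlt.ne (by exact_mod_cast hfac)

theorem not_isRoot_derivative_chiPoly {m : ℕ} (hm : 2 ≤ m) {z : ℂ} (hz : (chiPoly m).IsRoot z) :
    ¬ (derivative (chiPoly m)).IsRoot z := by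
  intro hz'
  have hP := prod_eq_factorial_of_isRoot_chiPoly hz
  have hfac : (m ! : ℂ) ≠ 0 := Nat.cast_ne_zero.2 m.factorial_ne_zero
  have hne : ∀ k ∈ range (m - 1), z + ((k : ℂ) + 1) ≠ 0 := fun k hk h0 =>
    hfac (hP ▸ prod_eq_zero hk h0)
  have hsum : ∑ k ∈ range (m - 1), (z + (k + 1))⁻¹ = 0 := by
    rw [IsRoot, derivative_chiPoly, eval_derivative_prod_X_add_C _ _ hne, hP] at hz'
    exact (mul_eq_zero.1 hz').resolve_left hfac
  have hs : (range (m - 1)).Nonempty := nonempty_range_iff.2 (by omega)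
  have him : z.im = 0 := Complex.im_eq_zero_of_sum_inv_add_ofReal_eq_zero hs
    (fun k => (k : ℝ) + 1) (by push_cast; exact hsum)
  obtain ⟨x, rfl⟩ : ∃ x : ℝ, z = x := ⟨z.re, Complex.ext rfl (by simpa using him)⟩
  have hbound := abs_prod_range_add_le_factorial_of_sum_inv_eq_zero
    (x := x) (n := m - 1) (by exact_mod_cast hsum)
  rw [(by exact_mod_cast hP : ∏ k ∈ range (m - 1), (x + (k + 1)) = (m ! : ℝ)),
    abs_of_nonneg (by positivity)] at hbound
  have hlt : (m - 1)! < m ! := (Nat.factorial_lt (by omega)).2 (by omega)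
  exact hlt.not_ge (by exact_mod_cast hbound)

/-- For `m ≥ 3`: (a) `1` is a root of `χ`; (b) every complex root of `χ` is simple;
(c) every root `λ ≠ 1` satisfies `Re λ < 1`. -/
theorem stmt2 (m : ℕ) (hm : 3 ≤ m) :
    (chiPoly m).IsRoot 1 ∧
    (∀ z : ℂ, (chiPoly m).IsRoot z → (chiPoly m).rootMultiplicity z = 1) ∧
    (∀ z : ℂ, (chiPoly m).IsRoot z → z ≠ 1 → z.re < 1) := by
  refine ⟨isRoot_chiPoly_one (by omega), fun z hz => ?_,
    fun z hz => re_lt_one_of_isRoot_chiPoly (by omega) hz⟩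
  exact rootMultiplicity_eq_one (chiPoly_ne_zero (by omega)) hz
    (not_isRoot_derivative_chiPoly (by omega) hz)
end

section
/- Fix an integer m ≥ 2 and let λ ∈ ℂ satisfy ∏_{k=1}^{m−1} (λ + k) = m! and Re(λ) > −1/2. Let C ∈ ℂ and let Z^{(1)}, …, Z^{(m)} be independent, identically distributed complex random variables with E[Z^{(i)}] = C and E|Z^{(i)}|² < ∞, independent of T. Then the complex random variable Y = e^{−λT}(Z^{(1)} + ⋯ + Z^{(m)}) satisfies E[Y] = C and E|Y|² < ∞. -/
open MeasureTheory ProbabilityTheory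

/-- The exponential distribution with rate `j`, given by its density
`x ↦ j e^{-jx}` on `(0,∞)`. -/
noncomputable def expLaw (j : ℕ) : Measure ℝ :=
  volume.withDensity (fun x => ENNReal.ofReal (if 0 < x then j * Real.exp (-(j * x)) else 0))

/-- The law of `T = τ₍₁₎ + ⋯ + τ₍ₘ₋₁₎`, where the `τ₍ⱼ₎` are independent and
`τ₍ⱼ₎` is exponential of rate `j`. -/
noncomputable def lawT (m : ℕ) : Measure ℝ :=
  Measure.map (fun x => ∑ j, x j) (Measure.pi (fun j : Fin (m - 1) => expLaw ((j : ℕ) + 1)))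

/-- A probability law `μZ` on `ℂ` solves the fixed point equation
`Z =_d e^{-λT}(Z⁽¹⁾ + ⋯ + Z⁽ᵐ⁾)` if, whenever `T, Z⁽¹⁾, …, Z⁽ᵐ⁾` are independent
(i.e. their joint law is the product measure), with `T` as above and each `Z⁽ⁱ⁾` of
law `μZ`, the law of `e^{-λT}(Z⁽¹⁾ + ⋯ + Z⁽ᵐ⁾)` is again `μZ`. -/
def SolvesFP (m : ℕ) (lam : ℂ) (μZ : Measure ℂ) : Prop :=
  Measure.map (fun p : ℝ × (Fin m → ℂ) => Complex.exp (-lam * p.1) * ∑ i, p.2 i)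
    ((lawT m).prod (Measure.pi fun _ : Fin m => μZ)) = μZ

/-!
By the characteristic equation, `E e^{-λT} = ∏_{j=1}^{m-1} j / (λ + j) = (m-1)! / m! = 1/m`, while
`E (Z⁽¹⁾ + ⋯ + Z⁽ᵐ⁾) = m C`; since `T` is independent of the `Z⁽ⁱ⁾`, the mean of `Y` is the product
of these. Likewise `|Y|² = |e^{-2λT}| |Z⁽¹⁾ + ⋯ + Z⁽ᵐ⁾|²` is a product of independent factors, the
first integrable because `Re (2λ) > -1 ≥ -j` for every rate `j` of the exponential summands of `T`.
-/

open Set Complex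

lemma expLaw_density_toReal_smul_cexp (j : ℕ) (c : ℂ) (x : ℝ) :
    (ENNReal.ofReal (if 0 < x then j * Real.exp (-(j * x)) else 0)).toReal • cexp (-c * x)
      = (Ioi 0).indicator (fun x : ℝ => (j : ℂ) * cexp (-(c + j) * x)) x := by
  by_cases hx : 0 < x
  · rw [if_pos hx, indicator_of_mem (mem_Ioi.mpr hx), ENNReal.toReal_ofReal (by positivity),
      real_smul]
    push_cast
    rw [mul_assoc, ← Complex.exp_add]
    ring_nf
  · rw [if_neg hx, indicator_of_notMem (notMem_Ioi.mpr (not_lt.mp hx))]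
    simp

lemma measurable_expLaw_density (j : ℕ) :
    Measurable fun x : ℝ => ENNReal.ofReal (if 0 < x then j * Real.exp (-(j * x)) else 0) :=
  (Measurable.ite measurableSet_Ioi (by fun_prop) measurable_const).ennreal_ofReal

lemma integrable_cexp_expLaw {j : ℕ} {c : ℂ} (hc : -(j : ℝ) < c.re) :
    Integrable (fun x : ℝ => cexp (-c * x)) (expLaw j) := by
  rw [expLaw, integrable_withDensity_iff_integrable_smul' (measurable_expLaw_density j)
    (.of_forall fun _ => ENNReal.ofReal_lt_top)]
  simp_rw [expLaw_density_toReal_smul_cexp]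
  rw [integrable_indicator_iff measurableSet_Ioi]
  exact (integrableOn_exp_mul_complex_Ioi
    (by simp only [neg_re, add_re, natCast_re]; linarith) 0).const_mul _

lemma integral_cexp_expLaw {j : ℕ} {c : ℂ} (hc : -(j : ℝ) < c.re) :
    ∫ x, cexp (-c * x) ∂expLaw j = j / (c + j) := by
  rw [expLaw, integral_withDensity_eq_integral_toReal_smul (measurable_expLaw_density j)
    (.of_forall fun _ => ENNReal.ofReal_lt_top)]
  simp_rw [expLaw_density_toReal_smul_cexp]
  rw [integral_indicator measurableSet_Ioi, integral_const_mul,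
    integral_exp_mul_complex_Ioi (by simp only [neg_re, add_re, natCast_re]; linarith),
    ofReal_zero, mul_zero, Complex.exp_zero, neg_div_neg_eq, mul_one_div]

lemma expLaw_eq_expMeasure (j : ℕ) : expLaw j = expMeasure j := by
  refine withDensity_congr_ae ?_
  filter_upwards [compl_mem_ae_iff.mpr (Real.volume_singleton (a := 0))] with x hx
  change _ = exponentialPDF j x
  rw [exponentialPDF_eq]
  rcases lt_trichotomy x 0 with h | h | h
  · rw [if_neg h.not_gt, if_neg h.not_ge]
  · exact absurd h hx
  · rw [if_pos h, if_pos h.le]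

instance isProbabilityMeasure_expLaw_succ (j : ℕ) : IsProbabilityMeasure (expLaw (j + 1)) := by
  rw [expLaw_eq_expMeasure]
  exact isProbabilityMeasure_expMeasure (by positivity)

instance isProbabilityMeasure_lawT (m : ℕ) : IsProbabilityMeasure (lawT m) :=
  Measure.isProbabilityMeasure_map (by fun_prop)

lemma cexp_neg_mul_sum {n : ℕ} (c : ℂ) (x : Fin n → ℝ) :
    cexp (-c * ↑(∑ j, x j)) = ∏ j, cexp (-c * x j) := by
  push_cast
  rw [Finset.mul_sum, Complex.exp_sum]

lemma integrable_cexp_lawT (m : ℕ) {c : ℂ} (hc : -1 < c.re) :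
    Integrable (fun t : ℝ => cexp (-c * t)) (lawT m) := by
  rw [lawT, integrable_map_measure (by fun_prop) (by fun_prop)]
  simp only [Function.comp_def, cexp_neg_mul_sum]
  exact Integrable.fintype_prod fun j => integrable_cexp_expLaw (by push_cast; linarith)

lemma integral_cexp_lawT (m : ℕ) {c : ℂ} (hc : -1 < c.re) :
    ∫ t, cexp (-c * t) ∂lawT m = ∏ k ∈ Finset.range (m - 1), ((k : ℂ) + 1) / (c + k + 1) := by
  rw [lawT, integral_map (by fun_prop) (by fun_prop)]
  simp only [cexp_neg_mul_sum]
  rw [integral_fintype_prod_eq_prod (fun _ (x : ℝ) => cexp (-c * x)),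
    ← Fin.prod_univ_eq_prod_range]
  refine Finset.prod_congr rfl fun j _ => ?_
  rw [integral_cexp_expLaw (by push_cast; linarith)]
  push_cast
  ring

lemma integral_cexp_lawT_of_root {m : ℕ} (hm : m ≠ 0) {c : ℂ} (hc : -1 < c.re)
    (hroot : ∏ k ∈ Finset.range (m - 1), (c + (k : ℂ) + 1) = (m.factorial : ℂ)) :
    ∫ t, cexp (-c * t) ∂lawT m = 1 / m := by
  have hfac : ∏ k ∈ Finset.range (m - 1), ((k : ℂ) + 1) = ((m - 1).factorial : ℂ) := by
    exact_mod_cast Finset.prod_range_add_one_eq_factorial (m - 1)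
  rw [integral_cexp_lawT m hc, Finset.prod_div_distrib, hfac, hroot,
    ← Nat.mul_factorial_pred hm]
  push_cast
  field_simp [(m - 1).factorial_ne_zero]

section SumOfIID

variable {ι E : Type*} [Fintype ι] [NormedAddCommGroup E] [MeasurableSpace E]
  {μ : Measure E} [IsProbabilityMeasure μ]

lemma memLp_sum_pi {p : ENNReal} (hμ : MemLp id p μ) :
    MemLp (fun z : ι → E => ∑ i, z i) p (Measure.pi fun _ => μ) :=
  memLp_finsetSum _ fun i _ => hμ.comp_measurePreserving (measurePreserving_eval _ i)

lemma integral_sum_pi [NormedSpace ℝ E] [OpensMeasurableSpace E] [SecondCountableTopology E]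
    (hμ : Integrable id μ) :
    ∫ z : ι → E, ∑ i, z i ∂Measure.pi (fun _ => μ) = Fintype.card ι • ∫ z, z ∂μ := by
  rw [integral_finsetSum (f := fun i (z : ι → E) => z i) _ fun i _ => integrable_eval hμ]
  simp [integral_eval]

end SumOfIID

lemma memLp_two_of_lintegral_sq_norm_lt_top {E : Type*} [NormedAddCommGroup E] [MeasurableSpace E]
    [OpensMeasurableSpace E] [SecondCountableTopology E] {μ : Measure E}
    (h : ∫⁻ z, ENNReal.ofReal (‖z‖ ^ 2) ∂μ < ⊤) : MemLp id 2 μ :=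
  (memLp_two_iff_integrable_sq_norm aestronglyMeasurable_id).mpr
    ⟨(measurable_id.norm.pow_const 2).aestronglyMeasurable,
      (hasFiniteIntegral_iff_ofReal (.of_forall fun _ => by positivity)).mpr h⟩

lemma norm_cexp_neg_mul_mul_sq (c : ℂ) (t : ℝ) (s : ℂ) :
    ‖cexp (-c * t) * s‖ ^ 2 = ‖cexp (-(2 * c) * t)‖ * ‖s‖ ^ 2 := by
  rw [norm_mul, mul_pow, ← norm_pow, ← Complex.exp_nat_mul]
  ring_nf

/-- If `λ` is a root of the characteristic polynomial with `Re λ > -1/2`, and the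
`Z⁽ⁱ⁾` are i.i.d. of mean `C` with finite second absolute moment, independent of `T`,
then `Y = e^{-λT}(Z⁽¹⁾ + ⋯ + Z⁽ᵐ⁾)` has mean `C` and finite second absolute moment. -/
theorem stmt5 (m : ℕ) (hm : 2 ≤ m) (lam : ℂ)
    (hroot : ∏ k ∈ Finset.range (m - 1), (lam + (k : ℂ) + 1) = (m.factorial : ℂ))
    (hre : -(1 / 2) < lam.re) (C : ℂ)
    (μZ : Measure ℂ) [IsProbabilityMeasure μZ]
    (hmom : ∫⁻ z, ENNReal.ofReal (‖z‖ ^ 2) ∂μZ < ⊤)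
    (hmean : ∫ z, z ∂μZ = C) :
    (∫ w, w ∂(Measure.map (fun p : ℝ × (Fin m → ℂ) => Complex.exp (-lam * p.1) * ∑ i, p.2 i)
        ((lawT m).prod (Measure.pi fun _ : Fin m => μZ))) = C) ∧
    (∫⁻ w, ENNReal.ofReal (‖w‖ ^ 2)
        ∂(Measure.map (fun p : ℝ × (Fin m → ℂ) => Complex.exp (-lam * p.1) * ∑ i, p.2 i)
        ((lawT m).prod (Measure.pi fun _ : Fin m => μZ))) < ⊤) := by
  have hY : Measurable fun p : ℝ × (Fin m → ℂ) => cexp (-lam * p.1) * ∑ i, p.2 i := by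
    fun_prop
  have hZ := memLp_two_of_lintegral_sq_norm_lt_top hmom
  constructor
  · rw [integral_map (f := fun w => w) hY.aemeasurable aestronglyMeasurable_id,
      integral_prod_mul (fun t : ℝ => cexp (-lam * t)) (fun z : Fin m → ℂ => ∑ i, z i),
      integral_cexp_lawT_of_root (by omega) (by linarith) hroot,
      integral_sum_pi (hZ.integrable one_le_two), hmean]
    have hm0 : (m : ℂ) ≠ 0 := by exact_mod_cast (by omega : m ≠ 0)
    rw [Fintype.card_fin, nsmul_eq_mul]
    field_simp
  · have hsq : Integrable (fun p : ℝ × (Fin m → ℂ) => ‖cexp (-lam * p.1) * ∑ i, p.2 i‖ ^ 2)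
        ((lawT m).prod (Measure.pi fun _ => μZ)) := by
      simp only [norm_cexp_neg_mul_mul_sq]
      have hexp := integrable_cexp_lawT m (c := 2 * lam)
        (by simp only [mul_re, re_ofNat, im_ofNat, zero_mul, sub_zero]; linarith)
      exact hexp.norm.mul_prod ((memLp_sum_pi hZ).integrable_norm_pow two_ne_zero)
    rw [lintegral_map (by fun_prop) hY]
    exact hsq.lintegral_lt_top
end

section
/- Let ψ : (0,∞) → [0,∞) be a bounded measurable function, let B be a strictly positive real random variable, and let p ∈ (0,1), a > 0 and C ≥ 0 be constants such that ψ(r) ≤ p·E[ψ(Br)] + C r^{−a} for all r > 0. If p·E[B^{−a}] < 1, then ψ(r) ≤ C r^{−a} / (1 − p·E[B^{−a}]) for all r > 0; in particular ψ(r) = O(r^{−a}) as r → ∞. -/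
open MeasureTheory Filter

/-! Substituting a bound `ψ ≤ K + D r^s` into the right-hand side of the recursion yields
`ψ ≤ p K + (p D E[B^s] + C) r^s`. The coefficient `D = C / (1 - p E[B^s])` is the fixed point
of `D ↦ p D E[B^s] + C`, so starting from a uniform bound `M` one gets `ψ ≤ pⁿ M + D r^s`
for every `n`, and `pⁿ → 0`. -/

theorem le_of_forall_le_pow_mul_add {x p M c : ℝ} (hp0 : 0 ≤ p) (hp1 : p < 1)
    (h : ∀ n : ℕ, x ≤ p ^ n * M + c) : x ≤ c := by
  have hlim : Tendsto (fun n : ℕ => p ^ n * M + c) atTop (nhds (0 * M + c)) :=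
    ((tendsto_pow_atTop_nhds_zero_of_lt_one hp0 hp1).mul_const M).add tendsto_const_nhds
  simpa using ge_of_tendsto' hlim h

section

variable {Ω : Type*} [MeasurableSpace Ω] {μ : Measure Ω} [IsProbabilityMeasure μ]
  {B : Ω → ℝ} {ψ : ℝ → ℝ} {s : ℝ}

theorem integral_comp_mul_le_add_rpow (hψ : ∀ x, 0 < x → 0 ≤ ψ x) {K D : ℝ}
    (hbound : ∀ x, 0 < x → ψ x ≤ K + D * x ^ s) (hBpos : ∀ᵐ ω ∂μ, 0 < B ω)
    (hBint : Integrable (fun ω => B ω ^ s) μ) {r : ℝ} (hr : 0 < r) :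
    ∫ ω, ψ (B ω * r) ∂μ ≤ K + D * (∫ ω, B ω ^ s ∂μ) * r ^ s := by
  have hint : Integrable (fun ω => K + D * r ^ s * B ω ^ s) μ :=
    (integrable_const K).add (hBint.const_mul _)
  calc ∫ ω, ψ (B ω * r) ∂μ ≤ ∫ ω, K + D * r ^ s * B ω ^ s ∂μ := by
        refine integral_mono_of_nonneg ?_ hint ?_ <;> filter_upwards [hBpos] with ω hω
        · exact hψ _ (mul_pos hω hr)
        · rw [mul_assoc, ← Real.mul_rpow hr.le hω.le, mul_comm r]
          exact hbound _ (mul_pos hω hr)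
    _ = K + D * (∫ ω, B ω ^ s ∂μ) * r ^ s := by
        rw [integral_add (integrable_const K) (hBint.const_mul _), integral_const,
          integral_const_mul, probReal_univ, one_smul]
        ring

theorem le_pow_mul_add_of_le_mul_integral_add (hψ : ∀ x, 0 < x → 0 ≤ ψ x) {M : ℝ}
    (hM : ∀ x, 0 < x → ψ x ≤ M) (hBpos : ∀ᵐ ω ∂μ, 0 < B ω)
    (hBint : Integrable (fun ω => B ω ^ s) μ) {p C : ℝ} (hp : 0 ≤ p) (hC : 0 ≤ C)
    (hrec : ∀ r, 0 < r → ψ r ≤ p * (∫ ω, ψ (B ω * r) ∂μ) + C * r ^ s)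
    (hcontr : p * ∫ ω, B ω ^ s ∂μ < 1) (n : ℕ) :
    ∀ r, 0 < r → ψ r ≤ p ^ n * M + C * r ^ s / (1 - p * ∫ ω, B ω ^ s ∂μ) := by
  set I := ∫ ω, B ω ^ s ∂μ
  have hgap : 0 < 1 - p * I := by linarith
  induction n with
  | zero =>
    intro r hr
    have : 0 ≤ C * r ^ s / (1 - p * I) := by positivity
    linarith [hM r hr]
  | succ n ih =>
    intro r hr
    have hstep := integral_comp_mul_le_add_rpow hψ
      (fun x hx => (ih x hx).trans_eq (by rw [mul_div_right_comm])) hBpos hBint hr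
    calc ψ r ≤ p * (∫ ω, ψ (B ω * r) ∂μ) + C * r ^ s := hrec r hr
      _ ≤ p * (p ^ n * M + C / (1 - p * I) * I * r ^ s) + C * r ^ s := by gcongr
      _ = p ^ (n + 1) * M + C * r ^ s / (1 - p * I) := by
        field_simp
        ring

end

theorem stmt12_general {Ω : Type*} [MeasurableSpace Ω] (μ : Measure Ω) [IsProbabilityMeasure μ]
    (ψ : ℝ → ℝ)
    (hψpos : ∀ r : ℝ, 0 < r → 0 ≤ ψ r) (hψbdd : ∃ M : ℝ, ∀ r : ℝ, 0 < r → ψ r ≤ M)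
    (B : Ω → ℝ) (hBpos : ∀ᵐ ω ∂μ, 0 < B ω)
    (p a C : ℝ) (hp : 0 < p) (hp1 : p < 1) (hC : 0 ≤ C)
    (hrec : ∀ r : ℝ, 0 < r → ψ r ≤ p * (∫ ω, ψ (B ω * r) ∂μ) + C * r ^ (-a))
    (hBint : Integrable (fun ω => B ω ^ (-a)) μ)
    (hcontr : p * ∫ ω, B ω ^ (-a) ∂μ < 1) :
    ∀ r : ℝ, 0 < r → ψ r ≤ C * r ^ (-a) / (1 - p * ∫ ω, B ω ^ (-a) ∂μ) := by
  obtain ⟨M, hM⟩ := hψbdd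
  intro r hr
  exact le_of_forall_le_pow_mul_add hp.le hp1 fun n =>
    le_pow_mul_add_of_le_mul_integral_add hψpos hM hBpos hBint hp.le hC hrec hcontr n r hr

/-- Gronwall-type lemma: if `ψ : (0,∞) → [0,∞)` is bounded and measurable,
`B > 0` a.s., `p ∈ (0,1)`, `a > 0`, `C ≥ 0`, `ψ(r) ≤ p·E[ψ(Br)] + C r^{-a}` for all
`r > 0`, and `p·E[B^{-a}] < 1`, then `ψ(r) ≤ C r^{-a}/(1 − p·E[B^{-a}])` for all `r > 0`. -/
theorem stmt12 {Ω : Type*} [MeasurableSpace Ω] (μ : Measure Ω) [IsProbabilityMeasure μ]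
    (ψ : ℝ → ℝ) (hψmeas : Measurable ψ)
    (hψpos : ∀ r : ℝ, 0 < r → 0 ≤ ψ r) (hψbdd : ∃ M : ℝ, ∀ r : ℝ, 0 < r → ψ r ≤ M)
    (B : Ω → ℝ) (hBmeas : Measurable B) (hBpos : ∀ᵐ ω ∂μ, 0 < B ω)
    (p a C : ℝ) (hp : 0 < p) (hp1 : p < 1) (ha : 0 < a) (hC : 0 ≤ C)
    (hrec : ∀ r : ℝ, 0 < r → ψ r ≤ p * (∫ ω, ψ (B ω * r) ∂μ) + C * r ^ (-a))
    (hBint : Integrable (fun ω => B ω ^ (-a)) μ)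
    (hcontr : p * ∫ ω, B ω ^ (-a) ∂μ < 1) :
    ∀ r : ℝ, 0 < r → ψ r ≤ C * r ^ (-a) / (1 - p * ∫ ω, B ω ^ (-a) ∂μ) :=
  stmt12_general μ ψ hψpos hψbdd B hBpos p a C hp hp1 hC hrec hBint hcontr
end
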